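/- arXiv:2304.02687 — 5 statements merged into one kernel-verified Lean document; each statement's English description precedes it below -/
import Mathlib

section
/- For z = (z₁,z₂) ∈ ℝ², define the two-option softmax σ₁(z) = exp(z₁)/(exp(z₁)+exp(z₂)), σ₂(z) = exp(z₂)/(exp(z₁)+exp(z₂)). Fix real game values V^i_{ℓp} for i,ℓ,p ∈ {1,2} and define the opinion-weighted value functions V̂^i(z¹,z²) = Σ_{ℓ,p∈{1,2}} σ_ℓ(z¹)·σ_p(z²)·V^i_{ℓp} on ℝ²×ℝ². Fix nominal opinions z̄¹, z̄² ∈ ℝ², and set φ_b(z)=σ₁(z)σ₂(z), φ_a(z)=(σ₁(z)−σ₂(z))·φ_b(z), a₁=φ_a(z̄¹)·[σ₁(z̄²)(V¹₁₁−V¹₂₁)+σ₂(z̄²)(V¹₁₂−V¹₂₂)], a₂=φ_a(z̄²)·[σ₁(z̄¹)(V²₁₁−V²₁₂)+σ₂(z̄¹)(V²₂₁−V²₂₂)], b_i=φ_b(z̄¹)·φ_b(z̄²)·(−V^i₁₁−V^i₂₂+V^i₁₂+V^i₂₁). Then the 4×4 matrix whose first two rows are the negatives of the second partial derivatives of V̂¹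 with respect to (the components of z¹, then all of (z¹,z²)) and whose last two rows are the negatives of the second partial derivatives of V̂² with respect to (the components of z², then all of (z¹,z²)), all evaluated at (z̄¹,z̄²), equals the Kronecker product Γ⊗H₀ where Γ = [[a₁,b₁],[b₂,a₂]] and H₀ = [[1,−1],[−1,1]]. Explicitly: for j,q ∈ {1,2} and ℓ,p ∈ {1,2}, −∂²V̂¹/∂z¹_ℓ ∂z^j_p (z̄¹,z̄²) equals the ((1,ℓ),(j,p)) entry of Γ⊗H₀, and −∂²V̂²/∂z²_ℓ ∂z^j_p (z̄¹,z̄²) equals the ((2,ℓ),(j,p)) entry of Γ⊗H₀. -/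
/-!
A two-option softmax depends on `z` only through the gap `z₀ - z₁`:
`σ_ℓ(z) = sigmoid (±(z₀ - z₁))`. Hence `V̂ⁱ(w) = gⁱ(u)` with `u_j = w(j,0) - w(j,1)` and
`gⁱ(u) = Σ σ(±u₀) σ(±u₁) Vⁱ_{ℓp}`, and by the chain rule `∂/∂w(j,p) = s_p ∂/∂u_j` with
`s = (1, -1)`. Every second partial of `V̂ⁱ` is therefore `s_ℓ s_p` times a second partial of
`gⁱ`, which is the factor `H₀ = s sᵀ`. The entries of `Γ` are the second partials of `gⁱ`,
computed from `σ' = σ(1 - σ)` and `σ'' = σ'(1 - 2σ)`; at the nominal gaps `φ_b = σ'` and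
`φ_a = -σ''`.
-/

open Kronecker

/-- Two-option softmax: `σ_ℓ(z) = exp(z_ℓ) / (exp(z₁) + exp(z₂))`. -/
noncomputable def sm (z : Fin 2 → ℝ) (ℓ : Fin 2) : ℝ :=
  Real.exp (z ℓ) / (Real.exp (z 0) + Real.exp (z 1))

/-- `φ_b(z) = σ₁(z)·σ₂(z)`. -/
noncomputable def phib (z : Fin 2 → ℝ) : ℝ := sm z 0 * sm z 1

/-- `φ_a(z) = (σ₁(z) − σ₂(z))·φ_b(z)`. -/
noncomputable def phia (z : Fin 2 → ℝ) : ℝ := (sm z 0 - sm z 1) * phib z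

/-- The opinion-weighted game value `V̂^i` of player `i`, as a function of the joint opinion
variable `w : Fin 2 × Fin 2 → ℝ`, where `w (j, p)` is the opinion of player `j` about
option `p`: `V̂^i = Σ_{ℓ,p} σ_ℓ(z¹) σ_p(z²) V^i_{ℓp}`. -/
noncomputable def Vhat (V : Fin 2 → Fin 2 → Fin 2 → ℝ) (i : Fin 2)
    (w : Fin 2 × Fin 2 → ℝ) : ℝ :=
  ∑ ℓ : Fin 2, ∑ p : Fin 2, sm (fun o => w (0, o)) ℓ * sm (fun o => w (1, o)) p * V i ℓ p

/-- Partial derivative of `f` in the coordinate `k` (agent, option). -/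
noncomputable def pder (k : Fin 2 × Fin 2) (f : (Fin 2 × Fin 2 → ℝ) → ℝ)
    (w : Fin 2 × Fin 2 → ℝ) : ℝ :=
  deriv (fun t => f (Function.update w k t)) (w k)

open Real Function

noncomputable def partialDeriv {ι : Type*} [DecidableEq ι] (k : ι) (g : (ι → ℝ) → ℝ)
    (u : ι → ℝ) : ℝ :=
  deriv (fun t => g (update u k t)) (u k)

lemma pder_eq_partialDeriv : pder = partialDeriv := rfl

def optionSign : Fin 2 → ℝ := ![1, -1]

def optionGap {ι : Type*} (w : ι × Fin 2 → ℝ) (j : ι) : ℝ := w (j, 0) - w (j, 1)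

section OptionGap

variable {ι : Type*} [DecidableEq ι]

lemma optionGap_update (w : ι × Fin 2 → ℝ) (j : ι) (p : Fin 2) (t : ℝ) :
    optionGap (update w (j, p) t) =
      update (optionGap w) j (optionGap w j + optionSign p * (t - w (j, p))) := by
  funext i
  by_cases hij : i = j
  · subst hij
    fin_cases p <;> simp [optionGap, optionSign]
  · simp [optionGap, hij]

lemma partialDeriv_comp_optionGap {g : (ι → ℝ) → ℝ} {j : ι}
    (hg : ∀ u, DifferentiableAt ℝ (fun t => g (update u j t)) (u j)) (p : Fin 2) :
    partialDeriv (j, p) (fun w => g (optionGap w)) =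
      fun w => optionSign p * partialDeriv j g (optionGap w) := by
  funext w
  have hinner : HasDerivAt (fun t => optionGap w j + optionSign p * (t - w (j, p)))
      (optionSign p) (w (j, p)) := by
    simpa using (((hasDerivAt_id _).sub_const (w (j, p))).const_mul (optionSign p)).const_add
      (optionGap w j)
  have hchain := (hg (optionGap w)).hasDerivAt.comp_of_eq (w (j, p)) hinner (by simp)
  simp only [partialDeriv, optionGap_update]
  rw [mul_comm]
  exact hchain.deriv

lemma partialDeriv_partialDeriv_comp_optionGap {g : (ι → ℝ) → ℝ} {i j : ι}
    (hg : ∀ u, DifferentiableAt ℝ (fun t => g (update u j t)) (u j))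
    (hg' : ∀ u, DifferentiableAt ℝ (fun t => partialDeriv j g (update u i t)) (u i))
    (ℓ p : Fin 2) :
    partialDeriv (i, ℓ) (partialDeriv (j, p) (fun w => g (optionGap w))) =
      fun w => optionSign ℓ * optionSign p * partialDeriv i (partialDeriv j g) (optionGap w) := by
  have hsg : ∀ u, DifferentiableAt ℝ
      (fun t => optionSign p * partialDeriv j g (update u i t)) (u i) :=
    fun u => (hg' u).const_mul _
  rw [partialDeriv_comp_optionGap hg,
    partialDeriv_comp_optionGap (g := fun u => optionSign p * partialDeriv j g u) hsg]
  funext w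
  simp only [partialDeriv, deriv_const_mul_field', mul_assoc]

end OptionGap

noncomputable def payoffPairing (f g : Fin 2 → ℝ → ℝ) (W : Fin 2 → Fin 2 → ℝ)
    (u : Fin 2 → ℝ) : ℝ :=
  ∑ ℓ, ∑ p, f ℓ (u 0) * g p (u 1) * W ℓ p

section PayoffPairing

variable {f f' g g' : Fin 2 → ℝ → ℝ} (W : Fin 2 → Fin 2 → ℝ)

lemma hasDerivAt_payoffPairing_update_zero (u : Fin 2 → ℝ)
    (hf : ∀ ℓ x, HasDerivAt (f ℓ) (f' ℓ x) x) :
    HasDerivAt (fun t => payoffPairing f g W (update u 0 t)) (payoffPairing f' g W u) (u 0) := by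
  simp only [payoffPairing, update_self, ne_eq, one_ne_zero, not_false_eq_true, update_of_ne]
  exact HasDerivAt.fun_sum fun ℓ _ => HasDerivAt.fun_sum fun p _ =>
    ((hf ℓ (u 0)).mul_const _).mul_const _

lemma hasDerivAt_payoffPairing_update_one (u : Fin 2 → ℝ)
    (hg : ∀ p x, HasDerivAt (g p) (g' p x) x) :
    HasDerivAt (fun t => payoffPairing f g W (update u 1 t)) (payoffPairing f g' W u) (u 1) := by
  simp only [payoffPairing, update_self, ne_eq, zero_ne_one, not_false_eq_true, update_of_ne]
  exact HasDerivAt.fun_sum fun ℓ _ => HasDerivAt.fun_sum fun p _ =>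
    ((hg p (u 1)).const_mul _).mul_const _

lemma partialDeriv_zero_payoffPairing (hf : ∀ ℓ x, HasDerivAt (f ℓ) (f' ℓ x) x) :
    partialDeriv 0 (payoffPairing f g W) = payoffPairing f' g W :=
  funext fun u => (hasDerivAt_payoffPairing_update_zero W u hf).deriv

lemma partialDeriv_one_payoffPairing (hg : ∀ p x, HasDerivAt (g p) (g' p x) x) :
    partialDeriv 1 (payoffPairing f g W) = payoffPairing f g' W :=
  funext fun u => (hasDerivAt_payoffPairing_update_one W u hg).deriv

lemma differentiableAt_payoffPairing_update (hf : ∀ ℓ, Differentiable ℝ (f ℓ))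
    (hg : ∀ p, Differentiable ℝ (g p)) (u : Fin 2 → ℝ) (j : Fin 2) :
    DifferentiableAt ℝ (fun t => payoffPairing f g W (update u j t)) (u j) := by
  fin_cases j
  · exact (hasDerivAt_payoffPairing_update_zero W u fun ℓ x =>
      (hf ℓ x).hasDerivAt).differentiableAt
  · exact (hasDerivAt_payoffPairing_update_one W u fun p x =>
      (hg p x).hasDerivAt).differentiableAt

end PayoffPairing

lemma hasDerivAt_deriv_sigmoid (x : ℝ) :
    HasDerivAt (deriv sigmoid) (deriv sigmoid x * (1 - 2 * sigmoid x)) x := by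
  rw [deriv_sigmoid]
  refine ((hasDerivAt_sigmoid x).fun_mul ((hasDerivAt_sigmoid x).const_sub 1)).congr_deriv ?_
  ring

noncomputable def sigmoidWeight (ℓ : Fin 2) (x : ℝ) : ℝ := sigmoid (optionSign ℓ * x)

noncomputable def sigmoidWeight' (ℓ : Fin 2) (x : ℝ) : ℝ := optionSign ℓ * deriv sigmoid x

noncomputable def sigmoidWeight'' (ℓ : Fin 2) (x : ℝ) : ℝ :=
  optionSign ℓ * (deriv sigmoid x * (1 - 2 * sigmoid x))

@[simp]
lemma sigmoidWeight_zero (x : ℝ) : sigmoidWeight 0 x = sigmoid x := by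
  simp [sigmoidWeight, optionSign]

@[simp]
lemma sigmoidWeight_one (x : ℝ) : sigmoidWeight 1 x = 1 - sigmoid x := by
  simp [sigmoidWeight, optionSign, sigmoid_neg]

lemma sm_eq_sigmoidWeight (z : Fin 2 → ℝ) (ℓ : Fin 2) :
    sm z ℓ = sigmoidWeight ℓ (z 0 - z 1) := by
  have hpos : 0 < exp (z 0) + exp (z 1) := by positivity
  fin_cases ℓ <;>
    simp only [sm, sigmoidWeight, sigmoid_def, optionSign, Fin.zero_eta, Fin.mk_one, Fin.isValue,
      Matrix.cons_val_zero, Matrix.cons_val_one, Matrix.cons_val_fin_one, neg_mul, one_mul,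
      neg_sub] <;>
    field_simp <;> rw [mul_add, mul_one, ← exp_add] <;> ring_nf

lemma hasDerivAt_sigmoidWeight (ℓ : Fin 2) (x : ℝ) :
    HasDerivAt (sigmoidWeight ℓ) (sigmoidWeight' ℓ x) x := by
  rw [sigmoidWeight', deriv_sigmoid]
  unfold sigmoidWeight
  fin_cases ℓ
  · simpa [optionSign] using hasDerivAt_sigmoid x
  · simpa [optionSign, sigmoid_neg] using (hasDerivAt_sigmoid x).const_sub 1

lemma hasDerivAt_sigmoidWeight' (ℓ : Fin 2) (x : ℝ) :
    HasDerivAt (sigmoidWeight' ℓ) (sigmoidWeight'' ℓ x) x :=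
  (hasDerivAt_deriv_sigmoid x).const_mul _

lemma Vhat_eq_payoffPairing (V : Fin 2 → Fin 2 → Fin 2 → ℝ) (i : Fin 2) :
    Vhat V i = fun w => payoffPairing sigmoidWeight sigmoidWeight (V i) (optionGap w) := by
  funext w
  simp only [Vhat, payoffPairing, sm_eq_sigmoidWeight, optionGap]

noncomputable def gapHessian (W : Fin 2 → Fin 2 → ℝ) (u : Fin 2 → ℝ) : Fin 2 → Fin 2 → ℝ :=
  ![![payoffPairing sigmoidWeight'' sigmoidWeight W u,
      payoffPairing sigmoidWeight' sigmoidWeight' W u],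
    ![payoffPairing sigmoidWeight' sigmoidWeight' W u,
      payoffPairing sigmoidWeight sigmoidWeight'' W u]]

lemma partialDeriv_partialDeriv_payoffPairing_sigmoidWeight (W : Fin 2 → Fin 2 → ℝ)
    (i j : Fin 2) :
    partialDeriv j (partialDeriv i (payoffPairing sigmoidWeight sigmoidWeight W)) =
      fun u => gapHessian W u i j := by
  fin_cases i <;> fin_cases j <;>
    simp [gapHessian, partialDeriv_zero_payoffPairing _ hasDerivAt_sigmoidWeight,
      partialDeriv_one_payoffPairing _ hasDerivAt_sigmoidWeight,
      partialDeriv_zero_payoffPairing _ hasDerivAt_sigmoidWeight',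
      partialDeriv_one_payoffPairing _ hasDerivAt_sigmoidWeight']

lemma pder_pder_Vhat (V : Fin 2 → Fin 2 → Fin 2 → ℝ) (k i ℓ j p : Fin 2)
    (w : Fin 2 × Fin 2 → ℝ) :
    pder (j, p) (pder (i, ℓ) (Vhat V k)) w =
      optionSign p * optionSign ℓ * gapHessian (V k) (optionGap w) i j := by
  have hσ : ∀ ℓ, Differentiable ℝ (sigmoidWeight ℓ) :=
    fun ℓ x => (hasDerivAt_sigmoidWeight ℓ x).differentiableAt
  have hσ' : ∀ ℓ, Differentiable ℝ (sigmoidWeight' ℓ) :=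
    fun ℓ x => (hasDerivAt_sigmoidWeight' ℓ x).differentiableAt
  have hpartial : ∀ i u, DifferentiableAt ℝ (fun t => partialDeriv i
      (payoffPairing sigmoidWeight sigmoidWeight (V k)) (update u j t)) (u j) := by
    refine Fin.forall_fin_two.2 ⟨fun u => ?_, fun u => ?_⟩
    · rw [partialDeriv_zero_payoffPairing _ hasDerivAt_sigmoidWeight]
      exact differentiableAt_payoffPairing_update _ hσ' hσ u j
    · rw [partialDeriv_one_payoffPairing _ hasDerivAt_sigmoidWeight]
      exact differentiableAt_payoffPairing_update _ hσ hσ' u j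
  rw [pder_eq_partialDeriv, Vhat_eq_payoffPairing, partialDeriv_partialDeriv_comp_optionGap
    (differentiableAt_payoffPairing_update _ hσ hσ · i) (hpartial i),
    partialDeriv_partialDeriv_payoffPairing_sigmoidWeight]

/-- Lemma 3 (entrywise): the matrix of negated second partial derivatives of the
opinion-weighted game values, evaluated at the nominal opinions `(z̄¹, z̄²)`, equals
`Γ ⊗ H₀` with `Γ = [[a₁,b₁],[b₂,a₂]]` and `H₀ = [[1,−1],[−1,1]]`. -/
theorem hessian_eq_kronecker (V : Fin 2 → Fin 2 → Fin 2 → ℝ) (z1 z2 : Fin 2 → ℝ)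
    (a₁ a₂ b₁ b₂ : ℝ)
    (ha₁ : a₁ = phia z1 * (sm z2 0 * (V 0 0 0 - V 0 1 0) + sm z2 1 * (V 0 0 1 - V 0 1 1)))
    (ha₂ : a₂ = phia z2 * (sm z1 0 * (V 1 0 0 - V 1 0 1) + sm z1 1 * (V 1 1 0 - V 1 1 1)))
    (hb₁ : b₁ = phib z1 * phib z2 * (-(V 0 0 0) - V 0 1 1 + V 0 0 1 + V 0 1 0))
    (hb₂ : b₂ = phib z1 * phib z2 * (-(V 1 0 0) - V 1 1 1 + V 1 0 1 + V 1 1 0))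
    (wbar : Fin 2 × Fin 2 → ℝ)
    (hw : wbar = fun k => if k.1 = 0 then z1 k.2 else z2 k.2) :
    (Matrix.of fun r c : Fin 2 × Fin 2 => - pder c (pder r (Vhat V r.1)) wbar) =
      !![a₁, b₁; b₂, a₂] ⊗ₖ !![(1 : ℝ), -1; -1, 1] := by
  have hΓ : ∀ i j, !![a₁, b₁; b₂, a₂] i j = -gapHessian (V i) (optionGap wbar) i j := by
    subst ha₁ ha₂ hb₁ hb₂ hw
    intro i j
    fin_cases i <;> fin_cases j <;>
      simp only [gapHessian, payoffPairing, Fin.sum_univ_two, optionGap, optionSign, phia, phib,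
        sm_eq_sigmoidWeight, sigmoidWeight_zero, sigmoidWeight_one, sigmoidWeight', sigmoidWeight'',
        deriv_sigmoid, Fin.zero_eta, Fin.mk_one, Fin.isValue, Matrix.of_apply, Matrix.cons_val',
        Matrix.cons_val_zero, Matrix.cons_val_one, Matrix.cons_val_fin_one, one_ne_zero,
        ↓reduceIte] <;>
      ring
  have hH₀ : ∀ ℓ p, !![(1 : ℝ), -1; -1, 1] ℓ p = optionSign ℓ * optionSign p := by
    intro ℓ p
    fin_cases ℓ <;> fin_cases p <;> simp [optionSign]
  ext ⟨i, ℓ⟩ ⟨j, p⟩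
  rw [Matrix.of_apply, pder_pder_Vhat, Matrix.kroneckerMap_apply, hΓ, hH₀]
  ring
end

section
/- Let b₁, b₂ ∈ ℝ, let λ̄ > 0 and d ∈ ℝ, and let s ∈ ℂ satisfy s² = b₁·b₂ with Re(s) ≥ 0. Let Γ₀ = [[0,b₁],[b₂,0]] and H₀ = [[1,−1],[−1,1]] be real 2×2 matrices, and let M = −d·I₄ + λ̄·(Γ₀⊗H₀), where ⊗ denotes the Kronecker product and I₄ the 4×4 identity. If d < 2·λ̄·Re(s), then M has a complex eigenvalue with strictly positive real part, namely −d + 2·λ̄·s; consequently the origin is an unstable equilibrium of the linear system ẏ = M·y. -/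
open Kronecker

/-- `μ` is an eigenvalue of the complex square matrix `M`: there is a nonzero vector `v`
with `M ⬝ v = μ • v` (equivalently, `μ` is a root of the characteristic polynomial). -/
def IsEigenvalue {n : Type*} [Fintype n] (M : Matrix n n ℂ) (μ : ℂ) : Prop :=
  ∃ v : n → ℂ, v ≠ 0 ∧ M.mulVec v = μ • v

lemma aux_eigen (b₁ b₂ : ℝ) (lam d : ℝ) (s : ℂ)
    (M : Matrix (Fin 2 × Fin 2) (Fin 2 × Fin 2) ℝ)
    (hM : M = (-d) • (1 : Matrix (Fin 2 × Fin 2) (Fin 2 × Fin 2) ℝ) +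
      lam • (!![(0 : ℝ), b₁; b₂, 0] ⊗ₖ !![(1 : ℝ), -1; -1, 1]))
    (x : Fin 2 → ℂ) (hx : x ≠ 0)
    (h1 : (b₁ : ℂ) * x 1 = s * x 0) (h2 : (b₂ : ℂ) * x 0 = s * x 1) :
    IsEigenvalue (M.map Complex.ofReal) (-(d : ℂ) + 2 * (lam : ℂ) * s) := by
  refine ⟨fun p => x p.1 * (![1, -1] : Fin 2 → ℂ) p.2, ?_, ?_⟩
  · intro h
    apply hx
    funext i
    have h0 := congrFun h (i, 0)
    simpa using h0
  · funext p
    subst hM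
    obtain ⟨i, j⟩ := p
    fin_cases i <;> fin_cases j <;>
      simp [Matrix.mulVec, dotProduct, Fintype.sum_prod_type,
        Fin.sum_univ_two, Matrix.one_apply, Prod.ext_iff] <;>
      first
        | linear_combination (2*(lam:ℂ))*h1
        | linear_combination (-(2*(lam:ℂ)))*h1
        | linear_combination (2*(lam:ℂ))*h2
        | linear_combination (-(2*(lam:ℂ)))*h2

/-- Theorem 1 (instability at the neutral opinion): if `d < 2·λ̄·Re(s)` with `s² = b₁b₂`,
then `M = −d·I₄ + λ̄·(Γ₀ ⊗ H₀)` has the eigenvalue `−d + 2·λ̄·s`, which has strictly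
positive real part; hence the origin of `ẏ = M·y` is unstable. -/
theorem instability_neutral_opinion (b₁ b₂ : ℝ) (lam d : ℝ) (hlam : 0 < lam)
    (s : ℂ) (hs : s ^ 2 = ((b₁ * b₂ : ℝ) : ℂ)) (hsre : 0 ≤ s.re)
    (M : Matrix (Fin 2 × Fin 2) (Fin 2 × Fin 2) ℝ)
    (hM : M = (-d) • (1 : Matrix (Fin 2 × Fin 2) (Fin 2 × Fin 2) ℝ) +
      lam • (!![(0 : ℝ), b₁; b₂, 0] ⊗ₖ !![(1 : ℝ), -1; -1, 1]))
    (hd : d < 2 * lam * s.re) :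
    IsEigenvalue (M.map Complex.ofReal) (-(d : ℂ) + 2 * (lam : ℂ) * s) ∧
      0 < (-(d : ℂ) + 2 * (lam : ℂ) * s).re := by
  constructor
  · by_cases h0 : s = 0 ∧ (b₂ : ℂ) = 0
    · refine aux_eigen b₁ b₂ lam d s M hM ![1, 0] ?_ ?_ ?_
      · intro h; simpa using congrFun h 0
      · simp [h0.1]
      · simp [h0.1, h0.2]
    · refine aux_eigen b₁ b₂ lam d s M hM ![s, (b₂ : ℂ)] ?_ ?_ ?_
      · intro h
        exact h0 ⟨by simpa using congrFun h 0, by simpa using congrFun h 1⟩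
      · have := hs; push_cast at this; simp; linear_combination -this
      · simp [mul_comm]
  · have : (-(d : ℂ) + 2 * (lam : ℂ) * s).re = -d + 2 * lam * s.re := by
      simp [Complex.add_re, Complex.mul_re]
    rw [this]; linarith
end

section
/- Let a₁, a₂, b₁, b₂ ∈ ℝ with a₁ < 0, a₂ < 0, and a₁·a₂ > b₁·b₂. Let d > 0 and λ̄ > 0, let Γ = [[a₁,b₁],[b₂,a₂]] and H₀ = [[1,−1],[−1,1]] be real 2×2 matrices, and let M = −d·I₄ + λ̄·(Γ⊗H₀), where ⊗ denotes the Kronecker product and I₄ the 4×4 identity. Then every complex eigenvalue of M has strictly negative real part; consequently the origin is an exponentially stable equilibrium of the linear system ẏ = M·y for an arbitrarily small damping d > 0. -/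
open Kronecker

/-- Any complex root of a monic quadratic with real coefficients, negative sum of roots and
positive product of roots, has negative real part. -/
lemma quad_root_re_neg (c₁ c₀ : ℝ) (h₁ : c₁ < 0) (h₀ : 0 < c₀) (s : ℂ)
    (hs : s ^ 2 - (c₁ : ℂ) * s + (c₀ : ℂ) = 0) : s.re < 0 := by
  have hre := congrArg Complex.re hs
  have him := congrArg Complex.im hs
  simp [pow_two, Complex.mul_re, Complex.mul_im, Complex.add_re, Complex.add_im,
    Complex.sub_re, Complex.sub_im, Complex.ofReal_re, Complex.ofReal_im] at hre him
  have hfac : s.im * (2 * s.re - c₁) = 0 := by nlinarith [him]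
  rcases mul_eq_zero.mp hfac with hy | hx
  · by_contra h
    push_neg at h
    nlinarith [hre, sq_nonneg s.re]
  · linarith

/-- Theorem 2 (opinion reflects game value), matrix-stability content: if `a₁, a₂ < 0` and
`a₁a₂ > b₁b₂`, then for any damping `d > 0` and attention `λ̄ > 0`, every complex eigenvalue
of `M = −d·I₄ + λ̄·(Γ ⊗ H₀)` has strictly negative real part; hence the origin of
`ẏ = M·y` is exponentially stable for arbitrarily small `d > 0`. -/
theorem stability_opinion_reflects_value (a₁ a₂ b₁ b₂ : ℝ)
    (ha₁ : a₁ < 0) (ha₂ : a₂ < 0) (hab : b₁ * b₂ < a₁ * a₂)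
    (d lam : ℝ) (hd : 0 < d) (hlam : 0 < lam)
    (M : Matrix (Fin 2 × Fin 2) (Fin 2 × Fin 2) ℝ)
    (hM : M = (-d) • (1 : Matrix (Fin 2 × Fin 2) (Fin 2 × Fin 2) ℝ) +
      lam • (!![a₁, b₁; b₂, a₂] ⊗ₖ !![(1 : ℝ), -1; -1, 1])) :
    ∀ μ : ℂ, IsEigenvalue (M.map Complex.ofReal) μ → μ.re < 0 := by
  intro μ hμ
  obtain ⟨v, hv0, hveq⟩ := hμ
  subst hM
  have h00 := congrFun hveq (0,0)
  have h01 := congrFun hveq (0,1)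
  have h10 := congrFun hveq (1,0)
  have h11 := congrFun hveq (1,1)
  simp [Matrix.mulVec, dotProduct, Fintype.sum_prod_type, Fin.sum_univ_two,
    Matrix.map_apply, Matrix.add_apply, Matrix.smul_apply, Matrix.one_apply,
    Matrix.kroneckerMap_apply, Prod.ext_iff] at h00 h01 h10 h11
  set w1 : ℂ := v 0 - v (0,1) with hw1def
  set w2 : ℂ := v (1,0) - v 1 with hw2def
  have hw1 : (μ + d) * w1 = 2 * lam * a₁ * w1 + 2 * lam * b₁ * w2 := by
    rw [hw1def, hw2def]; linear_combination h01 - h00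
  have hw2 : (μ + d) * w2 = 2 * lam * b₂ * w1 + 2 * lam * a₂ * w2 := by
    rw [hw1def, hw2def]; linear_combination h11 - h10
  by_cases hw0 : w1 = 0 ∧ w2 = 0
  · -- the difference vector vanishes: then μ = -d
    obtain ⟨hz1, hz2⟩ := hw0
    have hμd : μ = -(d : ℂ) := by
      by_contra hne
      have key : ∀ x : ℂ, (μ + d) * x = 0 → x = 0 := by
        intro x hx
        rcases mul_eq_zero.mp hx with h | h
        · exact absurd (by linear_combination h : μ = -(d:ℂ)) hne
        · exact h
      have z00 : v 0 = 0 := key _ (by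
        linear_combination -h00 + (lam:ℂ)*a₁*hz1 + (lam:ℂ)*b₁*hz2)
      have z01 : v (0,1) = 0 := key _ (by
        linear_combination -h01 - (lam:ℂ)*a₁*hz1 - (lam:ℂ)*b₁*hz2)
      have z10 : v (1,0) = 0 := key _ (by
        linear_combination -h10 + (lam:ℂ)*b₂*hz1 + (lam:ℂ)*a₂*hz2)
      have z11 : v 1 = 0 := key _ (by
        linear_combination -h11 - (lam:ℂ)*b₂*hz1 - (lam:ℂ)*a₂*hz2)
      obtain ⟨p, hp⟩ := Function.ne_iff.mp hv0
      fin_cases p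
      · exact hp z00
      · exact hp z01
      · exact hp z10
      · exact hp z11
    rw [hμd]
    simpa using hd
  · by_cases hz1 : w1 = 0
    · have hz2 : w2 ≠ 0 := fun h => hw0 ⟨hz1, h⟩
      have hcan : (μ + d - 2*(lam:ℂ)*a₂) * w2 = 0 := by
        linear_combination hw2 + 2*(lam:ℂ)*b₂*hz1
      have heq : μ + d - 2*(lam:ℂ)*a₂ = 0 := (mul_eq_zero.mp hcan).resolve_right hz2
      have hre := congrArg Complex.re heq
      simp [Complex.add_re, Complex.sub_re, Complex.mul_re] at hre
      nlinarith [hre]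
    · by_cases hz2 : w2 = 0
      · have hcan : (μ + d - 2*(lam:ℂ)*a₁) * w1 = 0 := by
          linear_combination hw1 + 2*(lam:ℂ)*b₁*hz2
        have heq : μ + d - 2*(lam:ℂ)*a₁ = 0 := (mul_eq_zero.mp hcan).resolve_right hz1
        have hre := congrArg Complex.re heq
        simp [Complex.add_re, Complex.sub_re, Complex.mul_re] at hre
        nlinarith [hre]
      · -- both w1, w2 nonzero: μ + d is a root of the quadratic of 2λΓ
        have key : ((μ+d)^2 - (2*(lam:ℂ)*((a₁:ℂ)+a₂))*(μ+d)
            + 4*(lam:ℂ)^2*((a₁:ℂ)*a₂ - (b₁:ℂ)*b₂)) * (w1*w2) = 0 := by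
          linear_combination ((μ+(d:ℂ)) - 2*(lam:ℂ)*a₂)*w2*hw1 + 2*(lam:ℂ)*b₁*w2*hw2
        have hq := (mul_eq_zero.mp key).resolve_right (mul_ne_zero hz1 hz2)
        have hs : (μ+d) ^ 2 - ((2*lam*(a₁+a₂) : ℝ) : ℂ) * (μ+d)
            + ((4*lam^2*(a₁*a₂-b₁*b₂) : ℝ) : ℂ) = 0 := by
          push_cast
          linear_combination hq
        have hc₁ : 2*lam*(a₁+a₂) < 0 := mul_neg_of_pos_of_neg (by linarith) (by linarith)
        have hc₀ : 0 < 4*lam^2*(a₁*a₂-b₁*b₂) := mul_pos (by positivity) (by linarith)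
        have := quad_root_re_neg _ _ hc₁ hc₀ _ hs
        simp [Complex.add_re] at this
        linarith
end

section
/- For z = (z₁,z₂) ∈ ℝ², define the two-option softmax σ₁(z) = exp(z₁)/(exp(z₁)+exp(z₂)), σ₂(z) = exp(z₂)/(exp(z₁)+exp(z₂)). Fix real game values V^i_{ℓp} for i,ℓ,p ∈ {1,2} and nominal opinions z̄¹, z̄² ∈ ℝ², set φ_b(z)=σ₁(z)σ₂(z), φ_a(z)=(σ₁(z)−σ₂(z))·φ_b(z), a₁=φ_a(z̄¹)·[σ₁(z̄²)(V¹₁₁−V¹₂₁)+σ₂(z̄²)(V¹₁₂−V¹₂₂)], a₂=φ_a(z̄²)·[σ₁(z̄¹)(V²₁₁−V²₁₂)+σ₂(z̄¹)(V²₂₁−V²₂₂)], b_i=φ_b(z̄¹)·φ_b(z̄²)·(−V^i₁₁−V^i₂₂+V^i₁₂+V^i₂₁). If V¹₁₁=V¹₂₁, V¹₁₂=V¹₂₂, V²₁₁=V²₁₂, and V²₂₁=V²₂₂, then a₁ = a₂ = b₁ = b₂ = 0; consequently, for any d > 0 and λ̄ ∈ ℝ, every complex eigenvalue of the 4×4 matrix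 −d·I₄ + λ̄·(Γ⊗H₀), where Γ = [[a₁,b₁],[b₂,a₂]] and H₀ = [[1,−1],[−1,1]], equals −d, which is strictly negative. -/
open Kronecker

/-- Corollary 1 (identical game values cannot form an opinion): if each agent's game values do
not distinguish between its own options, then `a₁ = a₂ = b₁ = b₂ = 0`, and every complex
eigenvalue of `−d·I₄ + λ̄·(Γ ⊗ H₀)` equals `−d`, which is strictly negative for `d > 0`. -/
theorem identical_values_pure_damping (V : Fin 2 → Fin 2 → Fin 2 → ℝ) (z1 z2 : Fin 2 → ℝ)
    (a₁ a₂ b₁ b₂ : ℝ)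
    (ha₁ : a₁ = phia z1 * (sm z2 0 * (V 0 0 0 - V 0 1 0) + sm z2 1 * (V 0 0 1 - V 0 1 1)))
    (ha₂ : a₂ = phia z2 * (sm z1 0 * (V 1 0 0 - V 1 0 1) + sm z1 1 * (V 1 1 0 - V 1 1 1)))
    (hb₁ : b₁ = phib z1 * phib z2 * (-(V 0 0 0) - V 0 1 1 + V 0 0 1 + V 0 1 0))
    (hb₂ : b₂ = phib z1 * phib z2 * (-(V 1 0 0) - V 1 1 1 + V 1 0 1 + V 1 1 0))
    (hV1 : V 0 0 0 = V 0 1 0) (hV2 : V 0 0 1 = V 0 1 1)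
    (hV3 : V 1 0 0 = V 1 0 1) (hV4 : V 1 1 0 = V 1 1 1)
    (d lam : ℝ) (hd : 0 < d) :
    (a₁ = 0 ∧ a₂ = 0 ∧ b₁ = 0 ∧ b₂ = 0) ∧
      ∀ μ : ℂ,
        IsEigenvalue
          ((((-d) • (1 : Matrix (Fin 2 × Fin 2) (Fin 2 × Fin 2) ℝ) +
            lam • (!![a₁, b₁; b₂, a₂] ⊗ₖ !![(1 : ℝ), -1; -1, 1]))).map Complex.ofReal) μ →
        μ = -(d : ℂ) ∧ μ.re < 0 := by
  have ha1 : a₁ = 0 := by simp [ha₁, hV1, hV2]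
  have ha2 : a₂ = 0 := by simp [ha₂, hV3, hV4]
  have hb1 : b₁ = 0 := by rw [hb₁, hV1, hV2]; ring
  have hb2 : b₂ = 0 := by rw [hb₂, hV3, hV4]; ring
  refine ⟨⟨ha1, ha2, hb1, hb2⟩, ?_⟩
  intro μ hμ
  obtain ⟨v, hv, hmv⟩ := hμ
  have hΓ : !![a₁, b₁; b₂, a₂] = (0 : Matrix (Fin 2) (Fin 2) ℝ) := by
    rw [ha1, ha2, hb1, hb2]
    ext i j
    fin_cases i <;> fin_cases j <;> simp
  have hM : (((-d) • (1 : Matrix (Fin 2 × Fin 2) (Fin 2 × Fin 2) ℝ) +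
      lam • (!![a₁, b₁; b₂, a₂] ⊗ₖ !![(1 : ℝ), -1; -1, 1]))).map Complex.ofReal
      = (-(d : ℂ)) • (1 : Matrix (Fin 2 × Fin 2) (Fin 2 × Fin 2) ℂ) := by
    rw [hΓ]
    ext i j
    simp [Matrix.map_apply, Matrix.one_apply, Matrix.kroneckerMap_apply, Matrix.smul_apply]
    split_ifs <;> simp
  rw [hM] at hmv
  have h1 : ((-(d : ℂ)) • (1 : Matrix (Fin 2 × Fin 2) (Fin 2 × Fin 2) ℂ)).mulVec v
      = (-(d : ℂ)) • v := by
    rw [Matrix.smul_mulVec, Matrix.one_mulVec]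
  rw [h1] at hmv
  have hμd : μ = -(d : ℂ) := by
    obtain ⟨i, hi⟩ := Function.ne_iff.mp hv
    have := congrFun hmv.symm i
    simp [Pi.smul_apply, smul_eq_mul] at this
    have hvi : v i ≠ 0 := by simpa using hi
    exact mul_right_cancel₀ hvi (by linear_combination this)
  refine ⟨hμd, ?_⟩
  rw [hμd]
  simpa using neg_neg_iff_pos.mpr hd
end

section
/- Let a₁, a₂, b₁, b₂, d, λ̄ ∈ ℝ, let Γ = [[a₁,b₁],[b₂,a₂]] and H₀ = [[1,−1],[−1,1]] be real 2×2 matrices, let M = −d·I₄ + λ̄·(Γ⊗H₀) with ⊗ the Kronecker product, and let s ∈ ℂ satisfy s² = (a₁−a₂)² + 4·b₁·b₂. Then a complex number μ is an eigenvalue of M (regarded as a complex matrix) if and only if μ = −d or μ = −d + λ̄·((a₁+a₂) + s) or μ = −d + λ̄·((a₁+a₂) − s). -/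
/-!
The matrix `H₀ = !![1, -1; -1, 1]` has eigenvalues `0` and `2`, so `Γ ⊗ H₀` has the eigenvalue
`0` twice and otherwise the eigenvalues of `2 • Γ`; in determinant form,
`det (c • 1 + Γ ⊗ H₀) = c ^ 2 * det (c • 1 + 2 • Γ)`. For a `2 × 2` matrix `Γ` with
`s ^ 2 = (tr Γ) ^ 2 - 4 * det Γ`, the eigenvalues of `2λ̄ • Γ` are `λ̄ (tr Γ ± s)`, hence
`det (M - μ) = (-d - μ) ^ 2 * (-d + λ̄ (a₁ + a₂ + s) - μ) * (-d + λ̄ (a₁ + a₂ - s) - μ)`.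
-/

open Kronecker Matrix

theorem isEigenvalue_iff_det_sub_smul_one_eq_zero {n : Type*} [Fintype n] [DecidableEq n]
    (M : Matrix n n ℂ) (μ : ℂ) : IsEigenvalue M μ ↔ (M - μ • 1).det = 0 := by
  simp only [IsEigenvalue, ← exists_mulVec_eq_zero_iff, sub_mulVec, smul_mulVec, one_mulVec,
    sub_eq_zero, ne_eq]

theorem det_smul_one_add_kronecker_laplacian {R : Type*} [CommRing R] (c : R)
    (A : Matrix (Fin 2) (Fin 2) R) :
    det (c • 1 + A ⊗ₖ !![1, -1; -1, 1]) = c ^ 2 * det (c • 1 + (2 : R) • A) := by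
  rw [← det_reindex_self finProdFinEquiv, det_fin_two]
  simp [det_succ_row_zero, Fin.sum_univ_succ, finProdFinEquiv, Fin.divNat, Fin.modNat,
    Fin.succAbove, one_apply]
  ring

theorem det_smul_one_add_two_mul_smul_fin_two {R : Type*} [CommRing R] (c t s : R)
    (A : Matrix (Fin 2) (Fin 2) R) (hs : s ^ 2 = A.trace ^ 2 - 4 * A.det) :
    det (c • 1 + (2 * t) • A) = (c + t * (A.trace + s)) * (c + t * (A.trace - s)) := by
  rw [det_fin_two, trace_fin_two] at *
  simp only [Matrix.add_apply, Matrix.smul_apply, one_apply_eq, one_apply_ne one_ne_zero,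
    one_apply_ne zero_ne_one, smul_eq_mul, mul_one, mul_zero, zero_add]
  linear_combination t ^ 2 * hs

/-- Spectral formula for the linearized game-induced opinion dynamics: the eigenvalues of
`M = −d·I₄ + λ̄·(Γ ⊗ H₀)`, with `Γ = [[a₁,b₁],[b₂,a₂]]`, `H₀ = [[1,−1],[−1,1]]`, and
`s² = (a₁−a₂)² + 4b₁b₂`, are exactly `−d` and `−d + λ̄·((a₁+a₂) ± s)`. -/
theorem eigenvalues_linearized_GiNOD (a₁ a₂ b₁ b₂ d lam : ℝ) (s : ℂ)
    (hs : s ^ 2 = (((a₁ - a₂) ^ 2 + 4 * b₁ * b₂ : ℝ) : ℂ))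
    (M : Matrix (Fin 2 × Fin 2) (Fin 2 × Fin 2) ℝ)
    (hM : M = (-d) • (1 : Matrix (Fin 2 × Fin 2) (Fin 2 × Fin 2) ℝ) +
      lam • (!![a₁, b₁; b₂, a₂] ⊗ₖ !![(1 : ℝ), -1; -1, 1]))
    (μ : ℂ) :
    IsEigenvalue (M.map Complex.ofReal) μ ↔
      μ = -(d : ℂ) ∨ μ = -(d : ℂ) + (lam : ℂ) * (((a₁ : ℂ) + a₂) + s) ∨
        μ = -(d : ℂ) + (lam : ℂ) * (((a₁ : ℂ) + a₂) - s) := by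
  have hM_sub : M.map Complex.ofReal - μ • 1 =
      (-d - μ) • 1 + ((lam : ℂ) • !![(a₁ : ℂ), b₁; b₂, a₂]) ⊗ₖ !![1, -1; -1, 1] := by
    subst hM
    ext ⟨i, j⟩ ⟨k, l⟩
    fin_cases i <;> fin_cases j <;> fin_cases k <;> fin_cases l <;> simp [one_apply] <;> ring
  have hs_discr :
      s ^ 2 = (!![(a₁ : ℂ), b₁; b₂, a₂].trace) ^ 2 - 4 * !![(a₁ : ℂ), b₁; b₂, a₂].det := by
    rw [trace_fin_two_of, det_fin_two_of, hs]
    push_cast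
    ring
  have hdet : (M.map Complex.ofReal - μ • 1).det =
      (-d - μ) ^ 2 * (-d + lam * (a₁ + a₂ + s) - μ) * (-d + lam * (a₁ + a₂ - s) - μ) := by
    rw [hM_sub, det_smul_one_add_kronecker_laplacian, smul_smul,
      det_smul_one_add_two_mul_smul_fin_two _ _ s _ hs_discr, trace_fin_two_of]
    ring
  rw [isEigenvalue_iff_det_sub_smul_one_eq_zero, hdet]
  simp only [mul_eq_zero, pow_eq_zero_iff two_ne_zero, sub_eq_zero, or_assoc, eq_comm (b := μ)]
end
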